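/- Let d ≥ 2 be an integer, n : ℕ, and p ∈ [0,1]. Then p · Tr(G_d^{⊗n} · σ_d^{⊗n}) + (1−p) · Tr((1 − G_d^{⊗n}) · α_d^{⊗n}) = p · ((d−1)/(d+1))^n; in particular, the two-outcome POVM {G_d^{⊗n}, 1 − G_d^{⊗n}} discriminates σ_d^{⊗n} from α_d^{⊗n} (with prior probabilities p and 1−p) with error probability exactly p((d−1)/(d+1))^n. -/

import Mathlib

/-! Tensor powers multiply and take traces copy by copy, so both traces are `n`-th powers of
single-copy traces. `G_d` is diagonal and kills exactly the vectors `|i i⟩`, where `Π_a` has zero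
diagonal weight, so `Tr(G_d α_d) = Tr α_d` and the `α`-term vanishes; `Tr(G_d σ_d)` counts the
`d(d-1)` off-diagonal basis pairs, each with weight `1/(d(d+1))`. -/

open Matrix Finset
open scoped BigOperators Kronecker ComplexOrder

noncomputable section

/-- The flip (swap) operator on `ℂ^d ⊗ ℂ^d`. -/
def Flip (d : ℕ) : Matrix (Fin d × Fin d) (Fin d × Fin d) ℂ :=
  Matrix.of fun p q => if p.1 = q.2 ∧ p.2 = q.1 then 1 else 0

/-- Projection onto the symmetric subspace, `Π_s = (1 + F)/2`. -/
def projSym (d : ℕ) : Matrix (Fin d × Fin d) (Fin d × Fin d) ℂ :=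
  (2 : ℂ)⁻¹ • (1 + Flip d)

/-- Projection onto the antisymmetric subspace, `Π_a = (1 - F)/2`. -/
def projAsym (d : ℕ) : Matrix (Fin d × Fin d) (Fin d × Fin d) ℂ :=
  (2 : ℂ)⁻¹ • (1 - Flip d)

/-- The symmetric Werner state `σ_d = (2/(d(d+1))) • Π_s`. -/
def wernerSym (d : ℕ) : Matrix (Fin d × Fin d) (Fin d × Fin d) ℂ :=
  (2 / ((d : ℂ) * ((d : ℂ) + 1))) • projSym d

/-- The antisymmetric Werner state `α_d = (2/(d(d-1))) • Π_a`. -/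
def wernerAsym (d : ℕ) : Matrix (Fin d × Fin d) (Fin d × Fin d) ℂ :=
  (2 / ((d : ℂ) * ((d : ℂ) - 1))) • projAsym d

/-- The POVM element `G_d`: diagonal, with `(i,j),(i,j)` entry `1` iff `i ≠ j`. -/
def Gmat (d : ℕ) : Matrix (Fin d × Fin d) (Fin d × Fin d) ℂ :=
  Matrix.diagonal fun p => if p.1 ≠ p.2 then 1 else 0

/-- `n`-fold tensor power of a matrix on `ℂ^d ⊗ ℂ^d`. -/
def tpow {d : ℕ} (n : ℕ) (X : Matrix (Fin d × Fin d) (Fin d × Fin d) ℂ) :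
    Matrix (Fin n → Fin d × Fin d) (Fin n → Fin d × Fin d) ℂ :=
  Matrix.of fun f g => ∏ m, X (f m) (g m)

/-- The twirled single-copy POVM element `M_d = ((d-1)/(d+1)) • Π_s + Π_a`. -/
def MdMat (d : ℕ) : Matrix (Fin d × Fin d) (Fin d × Fin d) ℂ :=
  (((d : ℂ) - 1) / ((d : ℂ) + 1)) • projSym d + projAsym d

/-- `A_k`: sum over all `k`-element subsets `S` of the copies of the tensor product with
`Π_a` on copies in `S` and `Π_s` elsewhere. -/
def Amat (d n k : ℕ) : Matrix (Fin n → Fin d × Fin d) (Fin n → Fin d × Fin d) ℂ :=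
  ∑ S ∈ Finset.powersetCard k (Finset.univ : Finset (Fin n)),
    Matrix.of fun f g => ∏ m, (if m ∈ S then projAsym d else projSym d) (f m) (g m)

/-- Partial transpose on `ℂ^d ⊗ ℂ^d`. -/
def pt {d : ℕ} (X : Matrix (Fin d × Fin d) (Fin d × Fin d) ℂ) :
    Matrix (Fin d × Fin d) (Fin d × Fin d) ℂ :=
  Matrix.of fun p q => X (p.1, q.2) (q.1, p.2)

/-- The maximally entangled state `Φ_d`. -/
def Phi (d : ℕ) : Matrix (Fin d × Fin d) (Fin d × Fin d) ℂ :=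
  Matrix.of fun p q => if p.1 = p.2 ∧ q.1 = q.2 then ((d : ℂ))⁻¹ else 0

/-- `n`-copy partial transpose. -/
def ptN {d n : ℕ} (Y : Matrix (Fin n → Fin d × Fin d) (Fin n → Fin d × Fin d) ℂ) :
    Matrix (Fin n → Fin d × Fin d) (Fin n → Fin d × Fin d) ℂ :=
  Matrix.of fun f g => Y (fun m => ((f m).1, (g m).2)) (fun m => ((g m).1, (f m).2))

/-- `T_l`: sum over all `l`-element subsets `S` of the copies of the tensor product with
`Φ_d` on copies in `S` and `1 - Φ_d` elsewhere. -/
def Tmat (d n l : ℕ) : Matrix (Fin n → Fin d × Fin d) (Fin n → Fin d × Fin d) ℂ :=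
  ∑ S ∈ Finset.powersetCard l (Finset.univ : Finset (Fin n)),
    Matrix.of fun f g => ∏ m, (if m ∈ S then Phi d else (1 - Phi d)) (f m) (g m)

/-- The matrix `Q` of the linear program: `Q l k = Σ_{j=0}^{min(l,k)}
(n−l choose k−j)(l choose j)(1−d)^j (1+d)^{l−j}`. -/
def Qmat (n : ℕ) (d : ℝ) (l k : ℕ) : ℝ :=
  ∑ j ∈ Finset.range (min l k + 1),
    ((n - l).choose (k - j) : ℝ) * (l.choose j : ℝ) * (1 - d) ^ j * (1 + d) ^ (l - j)

/-- A PPT POVM element on the `n`-copy space: `E`, `1 - E`, `E^Γ`, `(1-E)^Γ` all PSD. -/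
def IsPPTPovmElem {d n : ℕ}
    (E : Matrix (Fin n → Fin d × Fin d) (Fin n → Fin d × Fin d) ℂ) : Prop :=
  E.PosSemidef ∧ (1 - E).PosSemidef ∧ (ptN E).PosSemidef ∧ (ptN (1 - E)).PosSemidef

/-- Error probability for discriminating `σ_d^{⊗n}` (prior `p`) from `α_d^{⊗n}`
(prior `1-p`) with the two-outcome POVM `{E, 1 - E}`. -/
def errProb (d n : ℕ) (p : ℝ)
    (E : Matrix (Fin n → Fin d × Fin d) (Fin n → Fin d × Fin d) ℂ) : ℝ :=
  ((p : ℂ) * (E * tpow n (wernerSym d)).trace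
    + (1 - (p : ℂ)) * ((1 - E) * tpow n (wernerAsym d)).trace).re

/-- Separability of a bipartite matrix. -/
def IsSep {I J : Type*} [Fintype I] [Fintype J]
    (W : Matrix (I × J) (I × J) ℂ) : Prop :=
  ∃ (m : ℕ) (A : Fin m → Matrix I I ℂ) (B : Fin m → Matrix J J ℂ),
    (∀ i, (A i).PosSemidef) ∧ (∀ i, (B i).PosSemidef) ∧ W = ∑ i, A i ⊗ₖ B i

/-- Trace norm `‖X‖₁ = Tr √(Xᴴ X)`. -/
def traceNorm {ι : Type*} [Fintype ι] [DecidableEq ι] (X : Matrix ι ι ℂ) : ℝ :=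
  ((Matrix.posSemidef_conjTranspose_mul_self X).1.eigenvectorUnitary.1 *
    Matrix.diagonal ((fun r : ℝ => (r : ℂ)) ∘ (Real.sqrt ·) ∘ (Matrix.posSemidef_conjTranspose_mul_self X).1.eigenvalues) *
    (star (Matrix.posSemidef_conjTranspose_mul_self X).1.eigenvectorUnitary : Matrix ι ι ℂ)).trace.re

/-- Frobenius (Hilbert–Schmidt) norm `‖X‖₂ = √(Tr (Xᴴ X))`. -/
def frobNorm {ι : Type*} [Fintype ι] (X : Matrix ι ι ℂ) : ℝ :=
  Real.sqrt ((Xᴴ * X).trace.re)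

section TensorPower

variable {d : ℕ}

theorem tpow_mul (n : ℕ) (X Y : Matrix (Fin d × Fin d) (Fin d × Fin d) ℂ) :
    tpow n X * tpow n Y = tpow n (X * Y) := by
  ext f g
  simp only [tpow, Matrix.mul_apply, Matrix.of_apply, Finset.prod_univ_sum,
    Fintype.piFinset_univ, Finset.prod_mul_distrib]

theorem trace_tpow (n : ℕ) (X : Matrix (Fin d × Fin d) (Fin d × Fin d) ℂ) :
    (tpow n X).trace = X.trace ^ n := by
  simp only [Matrix.trace, tpow, Matrix.diag_apply, Matrix.of_apply]
  rw [← Fin.prod_const n, Finset.prod_univ_sum, Fintype.piFinset_univ]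

end TensorPower

section SingleCopy

variable {d : ℕ}

theorem trace_Gmat_mul (X : Matrix (Fin d × Fin d) (Fin d × Fin d) ℂ) :
    (Gmat d * X).trace = ∑ p ∈ (univ : Finset (Fin d)).offDiag, X p p := by
  simp only [Matrix.trace, Gmat, Matrix.diag_apply, Matrix.diagonal_mul, ite_mul, one_mul,
    zero_mul, ← Finset.sum_filter]
  congr 1
  ext p
  simp [Finset.mem_offDiag]

theorem projSym_apply_self_of_ne {p : Fin d × Fin d} (hp : p.1 ≠ p.2) :
    projSym d p p = 2⁻¹ := by
  simp [projSym, Flip, hp]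

theorem projAsym_apply_self_of_eq {p : Fin d × Fin d} (hp : p.1 = p.2) :
    projAsym d p p = 0 := by
  simp [projAsym, Flip, hp]

theorem trace_Gmat_mul_wernerSym (hd : d ≠ 0) :
    (Gmat d * wernerSym d).trace = ((d : ℂ) - 1) / ((d : ℂ) + 1) := by
  have hd' : (d : ℂ) ≠ 0 := Nat.cast_ne_zero.mpr hd
  have hd1 : (d : ℂ) + 1 ≠ 0 := by exact_mod_cast d.succ_ne_zero
  have hcard : (((univ : Finset (Fin d)).offDiag.card : ℕ) : ℂ) = d * d - d := by
    rw [Finset.offDiag_card, Finset.card_univ, Fintype.card_fin,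
      Nat.cast_sub (Nat.le_mul_self d), Nat.cast_mul]
  rw [trace_Gmat_mul, Finset.sum_congr rfl fun p hp => by
    rw [wernerSym, Matrix.smul_apply, projSym_apply_self_of_ne (Finset.mem_offDiag.mp hp).2.2,
      smul_eq_mul],
    Finset.sum_const, nsmul_eq_mul, hcard]
  field_simp

theorem trace_Gmat_mul_wernerAsym : (Gmat d * wernerAsym d).trace = (wernerAsym d).trace := by
  rw [trace_Gmat_mul, Matrix.trace]
  refine Finset.sum_subset (Finset.subset_univ _) fun p _ hp => ?_
  have hp : p.1 = p.2 := by simpa [Finset.mem_offDiag] using hp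
  simp [wernerAsym, projAsym_apply_self_of_eq hp]

end SingleCopy

theorem errProb_G_tpow_general (d : ℕ) (hd : 2 ≤ d) (n : ℕ) (p : ℝ) :
    (p : ℂ) * (tpow n (Gmat d) * tpow n (wernerSym d)).trace
      + (1 - (p : ℂ)) * ((1 - tpow n (Gmat d)) * tpow n (wernerAsym d)).trace
      = (p : ℂ) * (((d : ℂ) - 1) / ((d : ℂ) + 1)) ^ n := by
  have hAsym : ((1 - tpow n (Gmat d)) * tpow n (wernerAsym d)).trace = 0 := by
    rw [Matrix.sub_mul, Matrix.one_mul, Matrix.trace_sub, tpow_mul, trace_tpow, trace_tpow,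
      trace_Gmat_mul_wernerAsym, sub_self]
  rw [hAsym, mul_zero, add_zero, tpow_mul, trace_tpow, trace_Gmat_mul_wernerSym (by omega)]

/-- the POVM `{G_d^{⊗n}, 1 − G_d^{⊗n}}` has error probability exactly
`p ((d−1)/(d+1))^n`. -/
theorem errProb_G_tpow (d : ℕ) (hd : 2 ≤ d) (n : ℕ) (p : ℝ) (hp0 : 0 ≤ p) (hp1 : p ≤ 1) :
    (p : ℂ) * (tpow n (Gmat d) * tpow n (wernerSym d)).trace
      + (1 - (p : ℂ)) * ((1 - tpow n (Gmat d)) * tpow n (wernerAsym d)).trace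
      = (p : ℂ) * (((d : ℂ) - 1) / ((d : ℂ) + 1)) ^ n :=
  errProb_G_tpow_general d hd n p

end
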